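/- If two lcsc groups G and H (equipped with left-invariant proper continuous metrics) are coarsely equivalent, then they are measurably coarsely equivalent: there exist Borel measurable coarse Lipschitz maps f : G → H and g : H → G such that f∘g and g∘f are close to the identity maps. -/

import Mathlib

open Filter

def IsCoarseLipschitz {X Y : Type*} [MetricSpace X] [MetricSpace Y] (f : X → Y) : Prop :=
  ∃ a : ℝ → ℝ, Monotone a ∧ Tendsto a atTop atTop ∧
    ∀ x x', dist (f x) (f x') ≤ a (dist x x')

def Close {X Y : Type*} [MetricSpace X] [MetricSpace Y] (f g : X → Y) : Prop :=
  ∃ C : ℝ, ∀ x, dist (f x) (g x) ≤ C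

/-! Precompose a coarse Lipschitz map with a "nearby point of a dense sequence" map:
choosing for each `x` the first term of the sequence within distance `1` of `x` is
measurable, and it moves points by less than `1`, so the result is close to the original map.
Closeness preserves both coarse Lipschitz maps and coarse inverses, so measurable
replacements of `f` and `g` still form a coarse equivalence. -/

theorem exists_measurable_forall_exists_dist_lt {X Y : Type*} [PseudoMetricSpace X]
    [TopologicalSpace.SeparableSpace X] [MeasurableSpace X] [OpensMeasurableSpace X]
    [MeasurableSpace Y] (f : X → Y) {ε : ℝ} (hε : 0 < ε) :
    ∃ f' : X → Y, Measurable f' ∧ ∀ x, ∃ z, f' x = f z ∧ dist x z < ε := by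
  classical
  rcases isEmpty_or_nonempty X with hX | hX
  · exact ⟨f, measurable_of_empty f, isEmptyElim⟩
  set u := TopologicalSpace.denseSeq X
  have hu : ∀ x, ∃ n, dist x (u n) < ε :=
    fun x => (TopologicalSpace.denseRange_denseSeq X).exists_dist_lt x hε
  have hfind : Measurable fun x => Nat.find (hu x) :=
    measurable_find hu fun n => Metric.isOpen_ball.measurableSet
  exact ⟨fun x => f (u (Nat.find (hu x))), (measurable_from_top (f := f ∘ u)).comp hfind,
    fun x => ⟨_, rfl, Nat.find_spec (hu x)⟩⟩

section Coarse

variable {X Y Z : Type*} [MetricSpace X] [MetricSpace Y] [MetricSpace Z]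

theorem Close.trans {f g k : X → Y} (hfg : Close f g) (hgk : Close g k) : Close f k :=
  let ⟨C, hC⟩ := hfg
  let ⟨D, hD⟩ := hgk
  ⟨C + D, fun x => (dist_triangle _ (g x) _).trans (add_le_add (hC x) (hD x))⟩

theorem Close.comp_right {f f' : Y → Z} (h : Close f f') (g : X → Y) : Close (f ∘ g) (f' ∘ g) :=
  let ⟨C, hC⟩ := h
  ⟨C, fun x => hC (g x)⟩

theorem IsCoarseLipschitz.comp_close {f : Y → Z} (hf : IsCoarseLipschitz f) {g g' : X → Y}
    (h : Close g g') : Close (f ∘ g) (f ∘ g') :=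
  let ⟨a, ha_mono, _, ha⟩ := hf
  let ⟨C, hC⟩ := h
  ⟨a C, fun x => (ha (g x) (g' x)).trans (ha_mono (hC x))⟩

theorem IsCoarseLipschitz.of_close {f f' : X → Y} (hf : IsCoarseLipschitz f)
    (h : Close f' f) : IsCoarseLipschitz f' := by
  obtain ⟨a, ha_mono, ha_top, ha⟩ := hf
  obtain ⟨C, hC⟩ := h
  refine ⟨fun t => a t + 2 * C, ha_mono.add_const _, tendsto_atTop_add_const_right _ _ ha_top,
    fun x x' => ?_⟩
  calc dist (f' x) (f' x') ≤ dist (f' x) (f x) + dist (f x) (f x') + dist (f x') (f' x') :=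
        dist_triangle4 _ _ _ _
    _ ≤ C + a (dist x x') + C := by
        gcongr
        · exact hC x
        · exact ha x x'
        · exact dist_comm (f x') (f' x') ▸ hC x'
    _ = a (dist x x') + 2 * C := by ring

theorem IsCoarseLipschitz.close_of_forall_exists_dist_le {f f' : X → Y}
    (hf : IsCoarseLipschitz f) {r : ℝ} (h : ∀ x, ∃ z, f' x = f z ∧ dist x z ≤ r) :
    Close f' f := by
  obtain ⟨a, ha_mono, _, ha⟩ := hf
  refine ⟨a r, fun x => ?_⟩
  obtain ⟨z, hz, hxz⟩ := h x
  rw [hz]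
  exact (ha z x).trans (ha_mono (dist_comm z x ▸ hxz))

theorem IsCoarseLipschitz.exists_measurable_close [TopologicalSpace.SeparableSpace X]
    [MeasurableSpace X] [OpensMeasurableSpace X] [MeasurableSpace Y] {f : X → Y}
    (hf : IsCoarseLipschitz f) : ∃ f' : X → Y, Measurable f' ∧ Close f' f := by
  obtain ⟨f', hf'm, hf'⟩ := exists_measurable_forall_exists_dist_lt f one_pos
  exact ⟨f', hf'm, hf.close_of_forall_exists_dist_le fun x =>
    (hf' x).imp fun _ ⟨hz, hxz⟩ => ⟨hz, hxz.le⟩⟩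

theorem close_comp_id_of_close {f f' : X → Y} {g g' : Y → X} (hf : IsCoarseLipschitz f)
    (hff' : Close f' f) (hgg' : Close g' g) (hfg : Close (f ∘ g) id) : Close (f' ∘ g') id :=
  ((hff'.comp_right g').trans (hf.comp_close hgg')).trans hfg

end Coarse

theorem measurable_coarse_equivalence_general
    {G H : Type*} [MetricSpace G]
    [SecondCountableTopology G] [MeasurableSpace G] [BorelSpace G]
    [MetricSpace H]
    [SecondCountableTopology H] [MeasurableSpace H] [BorelSpace H]
    (hce : ∃ f : G → H, IsCoarseLipschitz f ∧ ∃ g : H → G, IsCoarseLipschitz g ∧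
      Close (f ∘ g) id ∧ Close (g ∘ f) id) :
    ∃ f : G → H, ∃ g : H → G, Measurable f ∧ Measurable g ∧
      IsCoarseLipschitz f ∧ IsCoarseLipschitz g ∧
      Close (f ∘ g) id ∧ Close (g ∘ f) id := by
  obtain ⟨f, hf, g, hg, hfg, hgf⟩ := hce
  obtain ⟨f', hf'm, hff'⟩ := hf.exists_measurable_close
  obtain ⟨g', hg'm, hgg'⟩ := hg.exists_measurable_close
  exact ⟨f', g', hf'm, hg'm, hf.of_close hff', hg.of_close hgg',
    close_comp_id_of_close hf hff' hgg' hfg, close_comp_id_of_close hg hgg' hff' hgf⟩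

/-- Coarsely equivalent lcsc groups (with left-invariant proper continuous metrics)
are measurably coarsely equivalent. -/
theorem measurable_coarse_equivalence
    {G H : Type*} [Group G] [MetricSpace G] [IsTopologicalGroup G] [ProperSpace G]
    [SecondCountableTopology G] [MeasurableSpace G] [BorelSpace G]
    [Group H] [MetricSpace H] [IsTopologicalGroup H] [ProperSpace H]
    [SecondCountableTopology H] [MeasurableSpace H] [BorelSpace H]
    (hGinv : ∀ x g h : G, dist (x * g) (x * h) = dist g h)
    (hHinv : ∀ x g h : H, dist (x * g) (x * h) = dist g h)
    (hce : ∃ f : G → H, IsCoarseLipschitz f ∧ ∃ g : H → G, IsCoarseLipschitz g ∧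
      Close (f ∘ g) id ∧ Close (g ∘ f) id) :
    ∃ f : G → H, ∃ g : H → G, Measurable f ∧ Measurable g ∧
      IsCoarseLipschitz f ∧ IsCoarseLipschitz g ∧
      Close (f ∘ g) id ∧ Close (g ∘ f) id :=
  measurable_coarse_equivalence_general hce
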